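/- arXiv:2405.11604 — 6 statements merged into one kernel-verified Lean document; each statement's English description precedes it below -/
import Mathlib

section
/- If G is a factor-critical simple graph with more than one vertex, then for every independent set T of G, the number of vertices in T is at most the number of neighbors of T in G, i.e., |T| ≤ |N_G(T)|. -/
/-! Some `t ∈ T` has a neighbour `w`: match `t` in `G - u` for any `u ≠ t`. Independence
puts `w` outside `T`, so a perfect matching of `G - w` sends each vertex of `T` to a
neighbour, injectively, i.e. maps `T` into `N_G(T)`. -/

open Finset

namespace TB

variable {V W : Type*}

/-- A matching of `G` given as a finite set of edges: each element is an edge of `G`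
and no two distinct edges share a vertex. -/
def IsMatching (G : SimpleGraph V) (M : Finset (Sym2 V)) : Prop :=
  (∀ e ∈ M, e ∈ G.edgeSet) ∧
    ∀ e ∈ M, ∀ f ∈ M, e ≠ f → ∀ v : V, v ∈ e → v ∉ f

/-- A perfect matching: a matching covering every vertex. -/
def IsPerfectMatching (G : SimpleGraph V) (M : Finset (Sym2 V)) : Prop :=
  IsMatching G M ∧ ∀ v : V, ∃ e ∈ M, v ∈ e

/-- The matching number `mat(G)`: the maximum size of a matching of `G`. -/
noncomputable def matchingNumber (G : SimpleGraph V) [Fintype V] : ℕ := by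
  classical
  exact Finset.univ.powerset.sup fun M => if IsMatching G M then M.card else 0

/-- `T` is an independent set of `G`. -/
def IsIndepSet (G : SimpleGraph V) (T : Finset V) : Prop :=
  ∀ u ∈ T, ∀ v ∈ T, ¬ G.Adj u v

/-- The neighborhood `N_G(T)` of a set of vertices `T`. -/
noncomputable def nbrSet (G : SimpleGraph V) [Fintype V] (T : Finset V) : Finset V := by
  classical
  exact Finset.univ.filter fun v => ∃ t ∈ T, G.Adj t v

/-- `G` is a Tutte-Berge graph: some independent set `T` satisfies
`|T| = |N_G(T)| + |V(G)| - 2 mat(G)` (written additively to avoid truncated subtraction). -/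
noncomputable def TutteBerge (G : SimpleGraph V) [Fintype V] : Prop :=
  ∃ T : Finset V, IsIndepSet G T ∧
    T.card + 2 * matchingNumber G = (nbrSet G T).card + Fintype.card V

/-- `G` is factor-critical: deleting any vertex leaves a graph with a perfect matching. -/
def FactorCritical (G : SimpleGraph V) : Prop :=
  ∀ v : V, ∃ M, IsPerfectMatching (G.induce {x | x ≠ v}) M

/-- The Gallai-Edmonds set `D(G)`: vertices missed by at least one maximum matching. -/
noncomputable def gallaiD (G : SimpleGraph V) [Fintype V] : Finset V := by
  classical
  exact Finset.univ.filter fun v =>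
    ∃ M, IsMatching G M ∧ M.card = matchingNumber G ∧ ∀ e ∈ M, v ∉ e

/-- The cone `G*` over `G`: a new apex vertex (`none`) joined to every vertex of `G`. -/
def cone (G : SimpleGraph V) : SimpleGraph (Option V) :=
  SimpleGraph.fromRel fun a b =>
    a = none ∨ ∃ u v, a = some u ∧ b = some v ∧ G.Adj u v

/-- The edge polytope `P_H`: convex hull of the points `e_u + e_v` over edges `{u,v}` of `H`. -/
noncomputable def edgePolytope (H : SimpleGraph W) : Set (W → ℝ) := by
  classical
  exact convexHull ℝ
    {x | ∃ u v, H.Adj u v ∧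
      x = fun w => (if w = u then (1 : ℝ) else 0) + (if w = v then (1 : ℝ) else 0)}

/-- Every connected component of `H` contains an odd cycle. -/
def HasOddCycleComponents (H : SimpleGraph W) : Prop :=
  ∀ c : H.ConnectedComponent, ∃ u, u ∈ c.supp ∧ ∃ p : H.Walk u u, p.IsCycle ∧ Odd p.length

/-- The neighborhood of a set of vertices, as a set. -/
def nbrSetSet (H : SimpleGraph W) (T : Set W) : Set W := {w | ∃ t ∈ T, H.Adj t w}

/-- The bipartite graph `B_H(T)` induced by `T`: vertex set `T ∪ N_H(T)`,
with the edges of `H` joining a vertex of `T` to a vertex of `N_H(T)`. -/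
def inducedBipartite (H : SimpleGraph W) (T : Set W) :
    SimpleGraph ↥(T ∪ nbrSetSet H T) :=
  SimpleGraph.fromRel fun a b => (a : W) ∈ T ∧ H.Adj a b

/-- An independent set `T` is fundamental in `H` if `B_H(T)` is connected (trivially so
if empty) and, when `T ∪ N_H(T) ≠ V(H)`, each connected component of
`H \ (T ∪ N_H(T))` contains an odd cycle. -/
def Fundamental (H : SimpleGraph W) (T : Set W) : Prop :=
  (∀ u ∈ T, ∀ v ∈ T, ¬ H.Adj u v) ∧
  (inducedBipartite H T).Preconnected ∧
  (T ∪ nbrSetSet H T ≠ Set.univ →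
    HasOddCycleComponents (H.induce (T ∪ nbrSetSet H T)ᶜ))


theorem IsMatching.eq_of_mem_of_mem {H : SimpleGraph W} {M : Finset (Sym2 W)}
    (hM : IsMatching H M) {x x' y : W} (h : s(x, y) ∈ M) (h' : s(x', y) ∈ M) : x = x' := by
  by_contra hne
  have hdiff : s(x, y) ≠ s(x', y) := fun heq => hne (Sym2.congr_left.mp heq)
  exact hM.2 _ h _ h' hdiff y (Sym2.mem_mk_right x y) (Sym2.mem_mk_right x' y)

theorem IsPerfectMatching.exists_adj_mem {H : SimpleGraph W} {M : Finset (Sym2 W)}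
    (hM : IsPerfectMatching H M) (x : W) : ∃ y, H.Adj x y ∧ s(x, y) ∈ M := by
  obtain ⟨e, he, hxe⟩ := hM.2 x
  obtain ⟨y, rfl⟩ := Sym2.mem_iff_exists.mp hxe
  exact ⟨y, hM.1.1 _ he, he⟩

theorem IsPerfectMatching.exists_injective_adj {H : SimpleGraph W} {M : Finset (Sym2 W)}
    (hM : IsPerfectMatching H M) : ∃ f : W → W, f.Injective ∧ ∀ x, H.Adj x (f x) := by
  choose f hadj hmem using hM.exists_adj_mem
  refine ⟨f, fun x x' hxx' => hM.1.eq_of_mem_of_mem (hmem x) ?_, hadj⟩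
  rw [hxx']
  exact hmem x'

theorem exists_injOn_adj_of_isPerfectMatching_induce {G : SimpleGraph V} {s : Set V}
    {M : Finset (Sym2 s)} (hM : IsPerfectMatching (G.induce s) M) :
    ∃ g : V → V, Set.InjOn g s ∧ ∀ x ∈ s, G.Adj x (g x) := by
  classical
  obtain ⟨f, hf, hadj⟩ := hM.exists_injective_adj
  refine ⟨fun x => if hx : x ∈ s then f ⟨x, hx⟩ else x, fun x hx x' hx' hxx' => ?_,
    fun x hx => ?_⟩
  · simp only [dif_pos hx, dif_pos hx'] at hxx'
    exact congrArg Subtype.val (hf (Subtype.ext hxx'))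
  · simpa [dif_pos hx] using hadj ⟨x, hx⟩

@[simp]
theorem mem_nbrSet [Fintype V] {G : SimpleGraph V} {T : Finset V} {v : V} :
    v ∈ nbrSet G T ↔ ∃ t ∈ T, G.Adj t v := by
  simp [nbrSet]

theorem card_le_card_nbrSet_of_injOn [Fintype V] {G : SimpleGraph V} {T : Finset V}
    {g : V → V} (hg : Set.InjOn g T) (hadj : ∀ x ∈ T, G.Adj x (g x)) :
    T.card ≤ (nbrSet G T).card :=
  Finset.card_le_card_of_injOn g (fun x hx => mem_nbrSet.mpr ⟨x, hx, hadj x hx⟩) hg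

theorem FactorCritical.exists_adj [Fintype V] {G : SimpleGraph V} (hfc : FactorCritical G)
    (hV : 1 < Fintype.card V) (t : V) : ∃ w, G.Adj t w := by
  obtain ⟨u, hut⟩ := Fintype.exists_ne_of_one_lt_card hV t
  obtain ⟨M, hM⟩ := hfc u
  obtain ⟨g, -, hadj⟩ := exists_injOn_adj_of_isPerfectMatching_induce hM
  exact ⟨g t, hadj t hut.symm⟩

/-- if `G` is factor-critical with more than one vertex, then every
independent set `T` satisfies `|T| ≤ |N_G(T)|`. -/
theorem factorCritical_indep_card_le {V : Type*} [Fintype V] (G : SimpleGraph V)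
    (hfc : FactorCritical G) (hV : 1 < Fintype.card V)
    (T : Finset V) (hT : IsIndepSet G T) :
    T.card ≤ (nbrSet G T).card := by
  rcases T.eq_empty_or_nonempty with rfl | ⟨t, ht⟩
  · simp
  obtain ⟨w, htw⟩ := hfc.exists_adj hV t
  have hwT : w ∉ T := fun hw => hT t ht w hw htw
  obtain ⟨M, hM⟩ := hfc w
  obtain ⟨g, hg, hadj⟩ := exists_injOn_adj_of_isPerfectMatching_induce hM
  have hTw : (T : Set V) ⊆ {x | x ≠ w} := fun x hx hxw => hwT (hxw ▸ hx)
  exact card_le_card_nbrSet_of_injOn (hg.mono hTw) fun x hx => hadj x (hTw hx)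

end TB
end

section
/- For any simple graph G and any independent set T of G, |T| ≤ |N_G(T)| + |V(G)| − 2·mat(G). -/
open Finset

namespace TB

variable {V W : Type*}

/-! Take a maximum matching `M`. An edge of `M` has at most one end in the independent set `T`,
and if it has one, its other end lies in `N(T)`; so `M` covers at most `|N(T)|` vertices of `T`,
and the remaining `2|M| - |N(T)|` or more vertices it covers lie outside `T`. -/

section

variable {G : SimpleGraph V} {M : Finset (Sym2 V)}

theorem exists_isMatching_card_eq_matchingNumber [Fintype V] (G : SimpleGraph V) :
    ∃ M, IsMatching G M ∧ #M = matchingNumber G := by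
  classical
  obtain ⟨M, -, hM⟩ := Finset.exists_mem_eq_sup (univ.powerset (α := Sym2 V))
    ⟨∅, empty_mem_powerset _⟩ fun M => if IsMatching G M then #M else 0
  by_cases h : IsMatching G M
  · exact ⟨M, h, by simp only [matchingNumber, hM, if_pos h]⟩
  · exact ⟨∅, ⟨by simp, by simp⟩, by simp only [matchingNumber, hM, if_neg h, card_empty]⟩

variable [DecidableEq V]

theorem IsMatching.pairwiseDisjoint_toFinset (hM : IsMatching G M) :
    (M : Set (Sym2 V)).PairwiseDisjoint Sym2.toFinset := fun e he f hf hef =>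
  disjoint_left.2 fun v hve hvf =>
    hM.2 e he f hf hef v (Sym2.mem_toFinset.1 hve) (Sym2.mem_toFinset.1 hvf)

theorem IsMatching.card_biUnion_toFinset (hM : IsMatching G M) :
    #(M.biUnion Sym2.toFinset) = 2 * #M := by
  rw [card_biUnion hM.pairwiseDisjoint_toFinset, mul_comm, ← smul_eq_mul, ← sum_const]
  exact sum_congr rfl fun e he =>
    Sym2.card_toFinset_of_not_isDiag e (G.not_isDiag_of_mem_edgeSet (hM.1 e he))

theorem IsMatching.card_biUnion_toFinset_inter (hM : IsMatching G M) (X : Finset V) :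
    #(M.biUnion Sym2.toFinset ∩ X) = ∑ e ∈ M, #(e.toFinset ∩ X) := by
  rw [biUnion_inter, card_biUnion]
  exact hM.pairwiseDisjoint_toFinset.mono fun _ => inter_subset_left

variable [Fintype V] {T : Finset V}

theorem card_toFinset_inter_le_card_toFinset_inter_nbrSet (hT : IsIndepSet G T) {e : Sym2 V}
    (he : e ∈ G.edgeSet) : #(e.toFinset ∩ T) ≤ #(e.toFinset ∩ nbrSet G T) := by
  have of_left_mem : ∀ {u w}, G.Adj u w → u ∈ T → #({u, w} ∩ T) ≤ #({u, w} ∩ nbrSet G T) := by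
    intro u w huw hu
    have hw : w ∉ T := fun hw => hT u hu w hw huw
    have hwN : w ∈ nbrSet G T := by
      simpa only [nbrSet, mem_filter, mem_univ, true_and] using ⟨u, hu, huw⟩
    rw [insert_inter_of_mem hu, singleton_inter_of_notMem hw, insert_empty, card_singleton]
    exact card_pos.2 ⟨w, by simp [hwN]⟩
  induction e using Sym2.ind with
  | _ u w =>
    rw [SimpleGraph.mem_edgeSet] at he
    rw [Sym2.toFinset_mk_eq]
    by_cases hu : u ∈ T
    · exact of_left_mem he hu
    by_cases hw : w ∈ T
    · rw [pair_comm]; exact of_left_mem he.symm hw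
    rw [insert_inter_of_notMem hu, singleton_inter_of_notMem hw, card_empty]
    exact Nat.zero_le _

theorem IsMatching.card_add_two_mul_card_le (hM : IsMatching G M) (hT : IsIndepSet G T) :
    #T + 2 * #M ≤ #(nbrSet G T) + Fintype.card V := by
  set S := M.biUnion Sym2.toFinset
  have hST : #(S ∩ T) ≤ #(S ∩ nbrSet G T) := by
    rw [hM.card_biUnion_toFinset_inter, hM.card_biUnion_toFinset_inter]
    exact sum_le_sum fun e he => card_toFinset_inter_le_card_toFinset_inter_nbrSet hT (hM.1 e he)
  have hSN : #(S ∩ nbrSet G T) ≤ #(nbrSet G T) := card_le_card inter_subset_right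
  have hSc : #(S \ T) ≤ #Tᶜ := card_le_card fun v hv => mem_compl.2 (mem_sdiff.1 hv).2
  have hS : #S = 2 * #M := hM.card_biUnion_toFinset
  have := card_inter_add_card_sdiff S T
  have := card_add_card_compl T
  omega

end

/-- for any simple graph `G` and independent set `T`,
`|T| ≤ |N_G(T)| + |V(G)| - 2 mat(G)` (written additively). -/
theorem indep_card_le_tutte_berge_bound {V : Type*} [Fintype V] (G : SimpleGraph V)
    (T : Finset V) (hT : IsIndepSet G T) :
    T.card + 2 * matchingNumber G ≤ (nbrSet G T).card + Fintype.card V := by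
  classical
  obtain ⟨M, hM, hcard⟩ := exists_isMatching_card_eq_matchingNumber G
  exact hcard ▸ hM.card_add_two_mul_card_le hT

end TB
end

section
/- A simple graph G is Tutte-Berge if and only if each connected component of G is Tutte-Berge. -/
open Finset

namespace TB

variable {V W : Type*}

lemma matching_card_le {G : SimpleGraph V} [Fintype V] {M : Finset (Sym2 V)}
    (h : IsMatching G M) : M.card ≤ matchingNumber G := by
  classical
  have h1 : M ∈ (Finset.univ : Finset (Sym2 V)).powerset := by simp
  have := Finset.le_sup (f := fun M => if IsMatching G M then M.card else 0) h1
  unfold matchingNumber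
  simpa [h] using this

lemma exists_max_matching (G : SimpleGraph V) [Fintype V] :
    ∃ M, IsMatching G M ∧ M.card = matchingNumber G := by
  classical
  have hne : ((Finset.univ : Finset (Sym2 V)).powerset).Nonempty := ⟨∅, by simp⟩
  obtain ⟨M, hM, hMeq⟩ := Finset.exists_mem_eq_sup _ hne
    (fun M => if IsMatching G M then M.card else 0)
  by_cases hm : IsMatching G M
  · refine ⟨M, hm, ?_⟩
    unfold matchingNumber
    rw [hMeq, if_pos hm]
  · refine ⟨∅, ⟨by simp, by simp⟩, ?_⟩
    have h0 : matchingNumber G = 0 := by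
      unfold matchingNumber
      rw [hMeq, if_neg hm]
    simp [h0]

open Classical in
lemma covered_card {G : SimpleGraph V} [Fintype V] {M : Finset (Sym2 V)}
    (h : IsMatching G M) :
    (Finset.univ.filter (fun v => ∃ e ∈ M, v ∈ e)).card = 2 * M.card := by
  classical
  have hC : (Finset.univ.filter (fun v => ∃ e ∈ M, v ∈ e))
      = M.biUnion (fun e => Finset.univ.filter (· ∈ e)) := by
    ext v; simp
  rw [hC, Finset.card_biUnion, Finset.sum_congr rfl (g := fun _ => 2), Finset.sum_const,
    smul_eq_mul, mul_comm]
  · intro e he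
    obtain ⟨a, b, rfl⟩ : ∃ a b, e = s(a,b) := ⟨e.out.1, e.out.2, e.out_eq.symm⟩
    have hab : a ≠ b := (G.ne_of_adj (by simpa using h.1 _ he))
    have : (Finset.univ.filter (· ∈ s(a,b))) = {a, b} := by
      ext v; simp [Sym2.mem_iff]
    rw [this, Finset.card_insert_of_notMem (by simpa using hab), Finset.card_singleton]
  · intro e he f hf hef
    simp only [Finset.disjoint_left, Finset.mem_filter]
    rintro v ⟨-, hv⟩ ⟨-, hv'⟩
    exact h.2 e he f hf hef v hv hv'

lemma indep_ineq {G : SimpleGraph V} [Fintype V] {T : Finset V}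
    (hT : IsIndepSet G T) :
    T.card + 2 * matchingNumber G ≤ (nbrSet G T).card + Fintype.card V := by
  classical
  obtain ⟨M, hM, hMcard⟩ := exists_max_matching G
  set C : Finset V := Finset.univ.filter (fun v => ∃ e ∈ M, v ∈ e) with hCdef
  have hCcard : C.card = 2 * matchingNumber G := by rw [← hMcard]; exact covered_card hM
  -- partner map from T ∩ C into nbrSet G T
  have hpart : ∀ t ∈ T ∩ C, ∃ p ∈ nbrSet G T, ∃ e ∈ M, t ∈ e ∧ p ∈ e ∧ p ≠ t := by
    intro t ht
    rw [Finset.mem_inter, hCdef, Finset.mem_filter] at ht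
    obtain ⟨htT, -, e, heM, hte⟩ := ht
    have hed : ¬ e.IsDiag := by
      have := hM.1 e heM
      obtain ⟨a, b, rfl⟩ : ∃ a b, e = s(a,b) := ⟨e.out.1, e.out.2, e.out_eq.symm⟩
      simpa using G.ne_of_adj (by simpa using this)
    set p := Sym2.Mem.other' hte with hp
    have hspec : s(t, p) = e := Sym2.other_spec' hte
    have hadj : G.Adj t p := by
      have := hM.1 e heM
      rw [← hspec] at this
      simpa using this
    refine ⟨p, ?_, e, heM, hte, ?_, hadj.ne'⟩
    · unfold nbrSet; simp only [Finset.mem_filter, Finset.mem_univ, true_and]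
      exact ⟨t, htT, hadj⟩
    · rw [← hspec]; simp
  -- injectivity: card (T ∩ C) ≤ card nbrSet
  have hinj : (T ∩ C).card ≤ (nbrSet G T).card := by
    choose p hpN e heM hte hpe hpt using hpart
    refine Finset.card_le_card_of_injOn (fun t => if h : t ∈ T ∩ C then p t h else t) ?_ ?_
    · intro t ht; rw [Finset.mem_coe] at ht; simp only [dif_pos ht]; exact hpN t ht
    · intro t1 h1 t2 h2 hp12
      simp only [Finset.mem_coe] at h1 h2
      simp only [dif_pos h1, dif_pos h2] at hp12
      by_contra hne
      have hee : e t1 h1 = e t2 h2 := by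
        by_contra hne'
        exact hM.2 _ (heM t1 h1) _ (heM t2 h2) hne' _ (hpe t1 h1) (hp12 ▸ hpe t2 h2)
      have hta : t1 ∈ e t1 h1 := hte t1 h1
      have htb : t2 ∈ e t1 h1 := hee ▸ hte t2 h2
      have hpa : p t1 h1 ∈ e t1 h1 := hpe t1 h1
      obtain ⟨a, b, hE⟩ : ∃ a b, e t1 h1 = s(a,b) :=
        ⟨(e t1 h1).out.1, (e t1 h1).out.2, (e t1 h1).out_eq.symm⟩
      have hp1 : p t1 h1 ≠ t1 := hpt t1 h1
      have hp2 : p t1 h1 ≠ t2 := by rw [hp12]; exact hpt t2 h2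
      rw [hE, Sym2.mem_iff] at hta htb hpa
      rcases hta with rfl | rfl <;> rcases htb with h | h <;>
        rcases hpa with h' | h' <;>
        first
          | exact hne h.symm
          | exact hp1 h'
          | exact hp2 (h'.trans h.symm)
  have hTsplit : T.card ≤ (T ∩ C).card + (T \ C).card := by
    rw [Finset.card_inter_add_card_sdiff]
  have hrest : (T \ C).card + C.card ≤ Fintype.card V := by
    rw [← Finset.card_union_of_disjoint (Finset.sdiff_disjoint)]
    exact Finset.card_le_univ _
  calc T.card + 2 * matchingNumber G ≤ ((T ∩ C).card + (T \ C).card) + C.card := by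
        rw [hCcard] at *; omega
    _ ≤ (nbrSet G T).card + Fintype.card V := by omega

open Classical in
lemma mk_eq_of_mem_edge {G : SimpleGraph V} {e : Sym2 V} (he : e ∈ G.edgeSet)
    {u v : V} (hu : u ∈ e) (hv : v ∈ e) :
    G.connectedComponentMk u = G.connectedComponentMk v := by
  obtain ⟨a, b, rfl⟩ : ∃ a b, e = s(a,b) := ⟨e.out.1, e.out.2, e.out_eq.symm⟩
  have hadj : G.Adj a b := by simpa using he
  rw [Sym2.mem_iff] at hu hv
  have hab := SimpleGraph.ConnectedComponent.connectedComponentMk_eq_of_adj hadj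
  rcases hu with rfl | rfl <;> rcases hv with rfl | rfl <;>
    first | rfl | exact hab | exact hab.symm

open Classical in
lemma matchingNumber_sum (G : SimpleGraph V) [Fintype V] :
    matchingNumber G = ∑ c : G.ConnectedComponent, matchingNumber (G.induce c.supp) := by
  classical
  apply le_antisymm
  · -- decompose a max matching of G into component matchings
    obtain ⟨M, hM, hMcard⟩ := exists_max_matching G
    rw [← hMcard]
    set fE : Sym2 V → G.ConnectedComponent := fun e => G.connectedComponentMk e.out.1 with hfEdef
    have hmem : ∀ e ∈ M, ∀ v ∈ e, v ∈ (fE e).supp := by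
      intro e he v hv
      rw [SimpleGraph.ConnectedComponent.mem_supp_iff]
      exact mk_eq_of_mem_edge (hM.1 e he) hv (Sym2.out_fst_mem e)
    rw [Finset.card_eq_sum_card_fiberwise (f := fE) (t := Finset.univ) (fun x _ => Finset.mem_univ _)]
    apply Finset.sum_le_sum
    intro c _
    -- map the fiber into a matching of the induced graph
    obtain ⟨v₀, hv₀⟩ := c.exists_rep
    have hv₀' : v₀ ∈ c.supp := by rwa [SimpleGraph.ConnectedComponent.mem_supp_iff]
    set g : V → ↥c.supp := fun v => if h : v ∈ c.supp then ⟨v, h⟩ else ⟨v₀, hv₀'⟩ with hgdef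
    have hg : ∀ v (h : v ∈ c.supp), (g v : V) = v := fun v h => by
      simp only [hgdef, dif_pos h]
    have hmemc : ∀ e ∈ M.filter (fE · = c), ∀ v ∈ e, v ∈ c.supp := by
      intro e he v hv
      rw [Finset.mem_filter] at he
      have := hmem e he.1 v hv
      rwa [he.2] at this
    have hback : ∀ e ∈ M.filter (fE · = c), Sym2.map (Subtype.val) (Sym2.map g e) = e := by
      intro e he
      rw [Sym2.map_map,
        Sym2.map_congr (f := Subtype.val ∘ g) (g := id) (fun v hv => hg v (hmemc e he v hv)),
        Sym2.map_id, id]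
    have hvmem : ∀ e ∈ M.filter (fE · = c), ∀ w : ↥c.supp, w ∈ Sym2.map g e → (w : V) ∈ e := by
      intro e he w hw
      rw [Sym2.mem_map] at hw
      obtain ⟨a, ha, rfl⟩ := hw
      rwa [hg a (hmemc e he a ha)]
    have hmatch : IsMatching (G.induce c.supp) ((M.filter (fE · = c)).image (Sym2.map g)) := by
      constructor
      · intro x hx
        rw [Finset.mem_image] at hx
        obtain ⟨e, he, rfl⟩ := hx
        have he' := (Finset.mem_filter.mp he).1
        obtain ⟨a, b, rfl⟩ : ∃ a b, e = s(a,b) := ⟨e.out.1, e.out.2, e.out_eq.symm⟩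
        have hadj : G.Adj a b := by simpa using hM.1 _ he'
        have ha : (g a : V) = a := hg a (hmemc _ he a (Sym2.mem_mk_left _ _))
        have hb : (g b : V) = b := hg b (hmemc _ he b (Sym2.mem_mk_right _ _))
        simp only [Sym2.map_pair_eq]
        simp [ha, hb, hadj]
      · intro x hx y hy hxy w hwx hwy
        rw [Finset.mem_image] at hx hy
        obtain ⟨e₁, he₁, rfl⟩ := hx
        obtain ⟨e₂, he₂, rfl⟩ := hy
        have hne : e₁ ≠ e₂ := fun h => hxy (by rw [h])
        exact hM.2 e₁ (Finset.mem_filter.mp he₁).1 e₂ (Finset.mem_filter.mp he₂).1 hne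
          (w : V) (hvmem e₁ he₁ w hwx) (hvmem e₂ he₂ w hwy)
    have hcard : ((M.filter (fE · = c)).image (Sym2.map g)).card = (M.filter (fE · = c)).card := by
      apply Finset.card_image_of_injOn
      intro e₁ h₁ e₂ h₂ h12
      have := congrArg (Sym2.map (Subtype.val : ↥c.supp → V)) h12
      rwa [hback e₁ h₁, hback e₂ h₂] at this
    calc (M.filter (fE · = c)).card
        = ((M.filter (fE · = c)).image (Sym2.map g)).card := hcard.symm
      _ ≤ matchingNumber (G.induce c.supp) := matching_card_le hmatch
  · -- combine component matchings into a matching of G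
    have hchoice : ∀ c : G.ConnectedComponent,
        ∃ N, IsMatching (G.induce c.supp) N ∧ N.card = matchingNumber (G.induce c.supp) :=
      fun c => exists_max_matching _
    choose N hN hNcard using hchoice
    set M : Finset (Sym2 V) := Finset.univ.biUnion
      (fun c : G.ConnectedComponent => (N c).image (Sym2.map (Subtype.val : ↥c.supp → V)))
      with hMdef
    have hvsupp : ∀ (c : G.ConnectedComponent) (e : Sym2 ↥c.supp) (v : V),
        v ∈ Sym2.map Subtype.val e → v ∈ c.supp := by
      intro c e v hv
      rw [Sym2.mem_map] at hv
      obtain ⟨a, -, rfl⟩ := hv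
      exact a.2
    have hMmatch : IsMatching G M := by
      constructor
      · intro x hx
        rw [hMdef, Finset.mem_biUnion] at hx
        obtain ⟨c, -, hx⟩ := hx
        rw [Finset.mem_image] at hx
        obtain ⟨e, he, rfl⟩ := hx
        obtain ⟨a, b, rfl⟩ : ∃ a b, e = s(a,b) := ⟨e.out.1, e.out.2, e.out_eq.symm⟩
        have := (hN c).1 _ he
        simp only [SimpleGraph.mem_edgeSet] at this ⊢
        simp only [Sym2.map_pair_eq]
        simpa using this
      · intro x hx y hy hxy w hwx hwy
        rw [hMdef, Finset.mem_biUnion] at hx hy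
        obtain ⟨c₁, -, hx⟩ := hx
        obtain ⟨c₂, -, hy⟩ := hy
        have hc : c₁ = c₂ := by
          rw [Finset.mem_image] at hx hy
          obtain ⟨e₁, he₁, rfl⟩ := hx
          obtain ⟨e₂, he₂, rfl⟩ := hy
          have h1 := hvsupp c₁ e₁ w hwx
          have h2 := hvsupp c₂ e₂ w hwy
          rw [SimpleGraph.ConnectedComponent.mem_supp_iff] at h1 h2
          rw [← h1, ← h2]
        subst hc
        rw [Finset.mem_image] at hx hy
        obtain ⟨e₁, he₁, rfl⟩ := hx
        obtain ⟨e₂, he₂, rfl⟩ := hy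
        have hne : e₁ ≠ e₂ := fun h => hxy (by rw [h])
        rw [Sym2.mem_map] at hwx hwy
        obtain ⟨a₁, ha₁, hae₁⟩ := hwx
        obtain ⟨a₂, ha₂, hae₂⟩ := hwy
        have : a₁ = a₂ := Subtype.ext (hae₁.trans hae₂.symm)
        subst this
        exact (hN c₁).2 e₁ he₁ e₂ he₂ hne a₁ ha₁ ha₂
    have hMcard : M.card = ∑ c : G.ConnectedComponent, matchingNumber (G.induce c.supp) := by
      rw [hMdef, Finset.card_biUnion]
      · apply Finset.sum_congr rfl
        intro c _
        rw [Finset.card_image_of_injective _ (Sym2.map.injective Subtype.val_injective),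
          hNcard]
      · intro c₁ _ c₂ _ hc12
        simp only [Function.onFun]
        rw [Finset.disjoint_left]
        intro x hx₁ hx₂
        rw [Finset.mem_image] at hx₁ hx₂
        obtain ⟨e₁, he₁, rfl⟩ := hx₁
        obtain ⟨e₂, he₂, he⟩ := hx₂
        obtain ⟨a, b, rfl⟩ : ∃ a b, e₁ = s(a,b) := ⟨e₁.out.1, e₁.out.2, e₁.out_eq.symm⟩
        have hmem : (a : V) ∈ Sym2.map Subtype.val s(a, b) := by
          simp only [Sym2.map_pair_eq]
          exact Sym2.mem_mk_left _ _
        have h1 : (a : V) ∈ c₁.supp := a.2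
        have h2 : (a : V) ∈ c₂.supp := hvsupp c₂ e₂ a (he ▸ hmem)
        rw [SimpleGraph.ConnectedComponent.mem_supp_iff] at h1 h2
        exact hc12 (h1 ▸ h2.symm ▸ rfl)
    rw [← hMcard]
    exact matching_card_le hMmatch

open Classical in
lemma card_sum_components {G : SimpleGraph V} [Fintype V] (T : Finset V)
    (S : (c : G.ConnectedComponent) → Finset ↥c.supp)
    (hTS : ∀ (c : G.ConnectedComponent) (v : V) (h : v ∈ c.supp), v ∈ T ↔ ⟨v, h⟩ ∈ S c) :
    T.card = ∑ c : G.ConnectedComponent, (S c).card := by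
  classical
  rw [Finset.card_eq_sum_card_fiberwise (f := fun v => G.connectedComponentMk v)
    (t := Finset.univ) (fun x _ => Finset.mem_univ _)]
  apply Finset.sum_congr rfl
  intro c _
  apply Finset.card_bij (fun v hv => (⟨v, by
    rw [SimpleGraph.ConnectedComponent.mem_supp_iff]
    exact (Finset.mem_filter.mp hv).2⟩ : ↥c.supp))
  · intro v hv
    exact (hTS c v _).mp (Finset.mem_filter.mp hv).1
  · intro v₁ h₁ v₂ h₂ h12
    exact congrArg Subtype.val h12
  · intro b hb
    refine ⟨(b : V), ?_, ?_⟩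
    · rw [Finset.mem_filter]
      refine ⟨(hTS c b b.2).mpr (by simpa using hb), ?_⟩
      rw [← SimpleGraph.ConnectedComponent.mem_supp_iff]
      exact b.2
    · simp

open Classical in
lemma card_V_sum (G : SimpleGraph V) [Fintype V] :
    Fintype.card V = ∑ c : G.ConnectedComponent, Fintype.card ↥c.supp := by
  classical
  rw [← Finset.card_univ]
  rw [card_sum_components (G := G) Finset.univ (fun c => Finset.univ) (by simp)]
  apply Finset.sum_congr rfl
  intro c _
  rw [Finset.card_univ]

open Classical in
lemma nbr_correspond {G : SimpleGraph V} [Fintype V] (T : Finset V)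
    (S : (c : G.ConnectedComponent) → Finset ↥c.supp)
    (hTS : ∀ (c : G.ConnectedComponent) (v : V) (h : v ∈ c.supp), v ∈ T ↔ ⟨v, h⟩ ∈ S c)
    (c : G.ConnectedComponent) (v : V) (h : v ∈ c.supp) :
    v ∈ nbrSet G T ↔ ⟨v, h⟩ ∈ nbrSet (G.induce c.supp) (S c) := by
  classical
  unfold nbrSet
  simp only [Finset.mem_filter, Finset.mem_univ, true_and]
  constructor
  · rintro ⟨t, htT, hadj⟩
    have hts : t ∈ c.supp := by
      rw [SimpleGraph.ConnectedComponent.mem_supp_iff]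
      rw [SimpleGraph.ConnectedComponent.mem_supp_iff] at h
      rw [← h]
      exact SimpleGraph.ConnectedComponent.connectedComponentMk_eq_of_adj hadj
    exact ⟨⟨t, hts⟩, (hTS c t hts).mp htT, by simpa using hadj⟩
  · rintro ⟨t, htS, hadj⟩
    exact ⟨(t : V), (hTS c t t.2).mpr (by simpa using htS), by simpa using hadj⟩

open Classical in
lemma indep_down {G : SimpleGraph V} [Fintype V] {T : Finset V}
    (S : (c : G.ConnectedComponent) → Finset ↥c.supp)
    (hTS : ∀ (c : G.ConnectedComponent) (v : V) (h : v ∈ c.supp), v ∈ T ↔ ⟨v, h⟩ ∈ S c)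
    (hT : IsIndepSet G T) (c : G.ConnectedComponent) :
    IsIndepSet (G.induce c.supp) (S c) := by
  intro u hu v hv hadj
  exact hT (u : V) ((hTS c u u.2).mpr (by simpa using hu))
    (v : V) ((hTS c v v.2).mpr (by simpa using hv)) (by simpa using hadj)

open Classical in
lemma indep_up {G : SimpleGraph V} [Fintype V] {T : Finset V}
    (S : (c : G.ConnectedComponent) → Finset ↥c.supp)
    (hTS : ∀ (c : G.ConnectedComponent) (v : V) (h : v ∈ c.supp), v ∈ T ↔ ⟨v, h⟩ ∈ S c)
    (hS : ∀ c, IsIndepSet (G.induce c.supp) (S c)) : IsIndepSet G T := by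
  intro u hu v hv hadj
  set c := G.connectedComponentMk u with hc
  have hus : u ∈ c.supp := by rw [SimpleGraph.ConnectedComponent.mem_supp_iff]
  have hvs : v ∈ c.supp := by
    rw [SimpleGraph.ConnectedComponent.mem_supp_iff, hc]
    exact (SimpleGraph.ConnectedComponent.connectedComponentMk_eq_of_adj hadj).symm
  exact hS c ⟨u, hus⟩ ((hTS c u hus).mp hu) ⟨v, hvs⟩ ((hTS c v hvs).mp hv) (by simpa using hadj)

open Classical in
/-- `G` is Tutte-Berge iff each connected component of `G` is Tutte-Berge. -/
theorem tutteBerge_iff_components {V : Type*} [Fintype V] (G : SimpleGraph V) :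
    TutteBerge G ↔ ∀ c : G.ConnectedComponent, TutteBerge (G.induce c.supp) := by
  classical
  constructor
  · rintro ⟨T, hTind, heq⟩ c₀
    set S : (c : G.ConnectedComponent) → Finset ↥c.supp :=
      fun c => Finset.univ.filter (fun a => (a : V) ∈ T) with hSdef
    have hTS : ∀ (c : G.ConnectedComponent) (v : V) (h : v ∈ c.supp),
        v ∈ T ↔ ⟨v, h⟩ ∈ S c := by
      intro c v h
      simp [hSdef]
    have hsum : ∑ c : G.ConnectedComponent,
        ((S c).card + 2 * matchingNumber (G.induce c.supp))
        = ∑ c : G.ConnectedComponent,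
          ((nbrSet (G.induce c.supp) (S c)).card + Fintype.card ↥c.supp) := by
      rw [Finset.sum_add_distrib, Finset.sum_add_distrib, ← Finset.mul_sum,
        ← matchingNumber_sum, ← card_sum_components T S hTS,
        ← card_sum_components (nbrSet G T) (fun c => nbrSet (G.induce c.supp) (S c))
          (nbr_correspond T S hTS),
        ← card_V_sum]
      exact heq
    have hle : ∀ c ∈ (Finset.univ : Finset G.ConnectedComponent),
        (S c).card + 2 * matchingNumber (G.induce c.supp)
          ≤ (nbrSet (G.induce c.supp) (S c)).card + Fintype.card ↥c.supp :=
      fun c _ => indep_ineq (indep_down S hTS hTind c)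
    have := (Finset.sum_eq_sum_iff_of_le hle).mp hsum c₀ (Finset.mem_univ _)
    exact ⟨S c₀, indep_down S hTS hTind c₀, this⟩
  · intro hcomp
    choose S hSind hSeq using hcomp
    set T : Finset V := Finset.univ.filter
      (fun v => ∃ (c : G.ConnectedComponent) (h : v ∈ c.supp), ⟨v, h⟩ ∈ S c) with hTdef
    have hTS : ∀ (c : G.ConnectedComponent) (v : V) (h : v ∈ c.supp),
        v ∈ T ↔ ⟨v, h⟩ ∈ S c := by
      intro c v h
      rw [hTdef, Finset.mem_filter]
      simp only [Finset.mem_univ, true_and]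
      constructor
      · rintro ⟨c', h', hm⟩
        have : c' = c := by
          rw [SimpleGraph.ConnectedComponent.mem_supp_iff] at h h'
          rw [← h, ← h']
        subst this
        exact hm
      · intro hm
        exact ⟨c, h, hm⟩
    refine ⟨T, indep_up S hTS hSind, ?_⟩
    rw [card_sum_components T S hTS,
      card_sum_components (nbrSet G T) (fun c => nbrSet (G.induce c.supp) (S c))
        (nbr_correspond T S hTS),
      card_V_sum G, matchingNumber_sum G, Finset.mul_sum,
      ← Finset.sum_add_distrib, ← Finset.sum_add_distrib]
    exact Finset.sum_congr rfl (fun c _ => hSeq c)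


end TB
end

section
/- Every König simple graph is Tutte-Berge: if α(G) + mat(G) = |V(G)| then a maximum independent set T of G satisfies |T| = |N_G(T)| + |V(G)| − 2·mat(G). -/
open Finset

namespace TB

variable {V W : Type*}

open Classical in
/-- The independence number `α(G)`. -/
noncomputable def indepNumber {V : Type*} (G : SimpleGraph V) [Fintype V] : ℕ :=
  Finset.univ.powerset.sup fun T => if IsIndepSet G T then T.card else 0

/-- every König graph is Tutte-Berge; a maximum independent set is a witness. -/
theorem koenig_tutteBerge {V : Type*} [Fintype V] (G : SimpleGraph V)
    (hK : indepNumber G + matchingNumber G = Fintype.card V)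
    (T : Finset V) (hT : IsIndepSet G T) (hTmax : T.card = indepNumber G) :
    T.card + 2 * matchingNumber G = (nbrSet G T).card + Fintype.card V := by
  classical
  have hle : ∀ S : Finset V, IsIndepSet G S → S.card ≤ indepNumber G := by
    intro S hS
    have : S ∈ Finset.univ.powerset := by simp
    have h := Finset.le_sup (f := fun T => if IsIndepSet G T then T.card else 0) this
    simpa [indepNumber, hS] using h
  have hdisj : Disjoint T (nbrSet G T) := by
    rw [Finset.disjoint_left]
    intro v hvT hvN
    simp only [nbrSet, Finset.mem_filter] at hvN
    obtain ⟨-, t, htT, hadj⟩ := hvN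
    exact hT t htT v hvT hadj
  have hcover : T ∪ nbrSet G T = Finset.univ := by
    apply Finset.eq_univ_of_forall
    intro v
    by_contra hv
    simp only [Finset.mem_union, nbrSet, Finset.mem_filter, Finset.mem_univ, true_and,
      not_or, not_exists, not_and] at hv
    obtain ⟨hvT, hvN⟩ := hv
    have hind : IsIndepSet G (insert v T) := by
      intro u hu w hw hadj
      rcases Finset.mem_insert.1 hu with hu | hu
      · rcases Finset.mem_insert.1 hw with hw | hw
        · rw [hu, hw] at hadj; exact G.loopless.irrefl v hadj
        · rw [hu] at hadj; exact hvN w hw (G.adj_symm hadj)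
      · rcases Finset.mem_insert.1 hw with hw | hw
        · rw [hw] at hadj; exact hvN u hu hadj
        · exact hT u hu w hw hadj
    have := hle _ hind
    rw [Finset.card_insert_of_notMem hvT] at this
    omega
  have hcard : T.card + (nbrSet G T).card = Fintype.card V := by
    rw [← Finset.card_union_of_disjoint hdisj, hcover, Finset.card_univ]
  omega

end TB
end

section
/- If G is a Tutte-Berge simple graph, then every connected component of the induced subgraph of G on D(G) is a single vertex (i.e., D(G) spans no edges). -/
open Finset

namespace TB

variable {V W : Type*}

/-!
Let `T` witness the Tutte-Berge equality and let `M` be a maximum matching. The matching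
partners of the matched vertices of `T` are distinct vertices of `N(T)`, so at least
`|T| - |N(T)| = |V| - 2|M|` vertices of `T` are missed by `M`. That accounts for every vertex
missed by `M`, so `D(G)` lies inside the independent set `T`.
-/

def matchedVerts [DecidableEq V] (M : Finset (Sym2 V)) : Finset V :=
  M.biUnion Sym2.toFinset

theorem mem_matchedVerts [DecidableEq V] {M : Finset (Sym2 V)} {v : V} :
    v ∈ matchedVerts M ↔ ∃ e ∈ M, v ∈ e := by
  simp only [matchedVerts, mem_biUnion, Sym2.mem_toFinset]

namespace IsMatching

variable {G : SimpleGraph V} {M : Finset (Sym2 V)}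

theorem eq_of_mem_of_mem_s10 (hM : IsMatching G M) {e f : Sym2 V} {v : V} (he : e ∈ M)
    (hf : f ∈ M) (hve : v ∈ e) (hvf : v ∈ f) : e = f := by
  by_contra hef
  exact hM.2 e he f hf hef v hve hvf

theorem card_matchedVerts [DecidableEq V] (hM : IsMatching G M) :
    #(matchedVerts M) = 2 * #M := by
  rw [matchedVerts, card_biUnion, sum_const_nat, mul_comm]
  · intro e he
    exact Sym2.card_toFinset_of_not_isDiag e (G.not_isDiag_of_mem_edgeSet (hM.1 e he))
  · intro e he f hf hef
    simp only [Function.onFun, disjoint_left, Sym2.mem_toFinset]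
    exact hM.2 e he f hf hef

theorem card_inter_matchedVerts_le [Fintype V] [DecidableEq V] (hM : IsMatching G M)
    (T : Finset V) : #(T ∩ matchedVerts M) ≤ #(nbrSet G T) := by
  refine card_le_card_of_forall_subsingleton (fun v w => s(v, w) ∈ M) ?_ ?_
  · intro v hv
    obtain ⟨hvT, hvM⟩ := mem_inter.1 hv
    obtain ⟨e, he, hve⟩ := mem_matchedVerts.1 hvM
    obtain ⟨w, rfl⟩ := Sym2.mem_iff_exists.1 hve
    refine ⟨w, ?_, he⟩
    simp only [nbrSet, mem_filter, mem_univ, true_and]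
    exact ⟨v, hvT, hM.1 _ he⟩
  · rintro w - a ⟨-, ha⟩ b ⟨-, hb⟩
    exact Sym2.congr_left.1 <|
      hM.eq_of_mem_of_mem_s10 ha hb (Sym2.mem_mk_right a w) (Sym2.mem_mk_right b w)

theorem compl_matchedVerts_subset [Fintype V] [DecidableEq V] (hM : IsMatching G M)
    {T : Finset V} (hT : #T + 2 * #M = #(nbrSet G T) + Fintype.card V) :
    (matchedVerts M)ᶜ ⊆ T := by
  have hsub : T \ matchedVerts M ⊆ (matchedVerts M)ᶜ := fun v hv =>
    mem_compl.2 (mem_sdiff.1 hv).2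
  have hcard : #(matchedVerts M)ᶜ ≤ #(T \ matchedVerts M) := by
    have := hM.card_inter_matchedVerts_le T
    have := card_inter_add_card_sdiff T (matchedVerts M)
    rw [card_compl, hM.card_matchedVerts]
    omega
  rw [← eq_of_subset_of_card_le hsub hcard]
  exact sdiff_subset

end IsMatching

theorem gallaiD_subset [Fintype V] {G : SimpleGraph V} {T : Finset V}
    (hT : #T + 2 * matchingNumber G = #(nbrSet G T) + Fintype.card V) : gallaiD G ⊆ T := by
  classical
  intro u hu
  simp only [gallaiD, mem_filter, mem_univ, true_and] at hu
  obtain ⟨M, hM, hMcard, hu⟩ := hu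
  rw [← hMcard] at hT
  refine hM.compl_matchedVerts_subset hT (mem_compl.2 fun huM => ?_)
  obtain ⟨e, he, hue⟩ := mem_matchedVerts.1 huM
  exact hu e he hue

/-- if `G` is Tutte-Berge, then `D(G)` spans no edges, i.e. every connected
component of the induced subgraph on `D(G)` is a single vertex. -/
theorem gallaiD_no_edges_of_tutteBerge {V : Type*} [Fintype V] (G : SimpleGraph V)
    (hG : TutteBerge G) :
    ∀ u ∈ gallaiD G, ∀ v ∈ gallaiD G, ¬ G.Adj u v := by
  obtain ⟨T, hInd, hT⟩ := hG
  intro u hu v hv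
  exact hInd u (gallaiD_subset hT hu) v (gallaiD_subset hT hv)

end TB
end

section
/- Let M be a maximum matching of a simple graph G and v ∈ A(G) (a vertex outside D(G) adjacent to D(G)). Then M contains an edge joining v to a vertex in some connected component of the subgraph induced by D(G). -/
/-!
Since `v ∉ D(G)`, `M` matches `v` to some `w`. Take a maximum matching `N` missing `u`. Flipping
the `M`-`N` alternating path from `u` turns `M` into a maximum matching `M'` missing `u`, and
every edge of `M` destroyed on the way has an end in `D(G)`. If `vw` survives in `M'`, replacing
it by `vu` gives a maximum matching missing `w`; otherwise `w ∈ D(G)` directly, as `v ∉ D(G)`.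
-/
open Finset

namespace TB

variable {V W : Type*}

lemma Finset.union_insert_erase_subset {α : Type*} [DecidableEq α] {M N : Finset α} {x : α}
    (hx : x ∈ M) (y : α) : M ∪ insert x (N.erase y) ⊆ M ∪ N := by
  grind

lemma Finset.card_sdiff_insert_erase_lt {α : Type*} [DecidableEq α] {M N : Finset α} {x y : α}
    (hxM : x ∈ M) (hxN : x ∉ N) (hyM : y ∉ M) :
    (M \ insert x (N.erase y)).card < (M \ N).card := by
  refine Finset.card_lt_card ((Finset.ssubset_iff_of_subset ?_).2 ⟨x, ?_⟩) <;> grind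

section

variable {G : SimpleGraph V}

def IsMaximumMatching [Fintype V] (G : SimpleGraph V) (K : Finset (Sym2 V)) : Prop :=
  IsMatching G K ∧ K.card = matchingNumber G

lemma IsMatching.card_le_matchingNumber [Fintype V] {K : Finset (Sym2 V)}
    (hK : IsMatching G K) : K.card ≤ matchingNumber G := by
  classical
  have h := Finset.le_sup (f := fun K => if IsMatching G K then K.card else 0)
    (Finset.mem_powerset.2 (Finset.subset_univ K))
  simpa only [matchingNumber, if_pos hK] using h

lemma mem_gallaiD [Fintype V] {v : V} :
    v ∈ gallaiD G ↔ ∃ K, IsMaximumMatching G K ∧ ∀ e ∈ K, v ∉ e := by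
  simp [gallaiD, IsMaximumMatching, and_assoc]

lemma IsMatching.eq_of_mem {K : Finset (Sym2 V)} (hK : IsMatching G K) {e f : Sym2 V}
    (he : e ∈ K) (hf : f ∈ K) {x : V} (hxe : x ∈ e) (hxf : x ∈ f) : e = f :=
  by_contra fun hne => hK.2 e he f hf hne x hxe hxf

lemma IsMatching.mono {K L : Finset (Sym2 V)} (hL : IsMatching G L) (hKL : K ⊆ L) :
    IsMatching G K :=
  ⟨fun e he => hL.1 e (hKL he), fun e he f hf => hL.2 e (hKL he) f (hKL hf)⟩

lemma IsMatching.insert [DecidableEq V] {K : Finset (Sym2 V)} (hK : IsMatching G K)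
    {f : Sym2 V} (hf : f ∈ G.edgeSet) (hdisj : ∀ e ∈ K, ∀ x ∈ f, x ∉ e) :
    IsMatching G (insert f K) := by
  refine ⟨fun e he => ?_, fun e he e' he' hne x hxe hxe' => ?_⟩
  · rcases Finset.mem_insert.1 he with rfl | he
    exacts [hf, hK.1 e he]
  · rcases Finset.mem_insert.1 he with rfl | heK <;>
      rcases Finset.mem_insert.1 he' with rfl | he'K
    · exact hne rfl
    · exact hdisj e' he'K x hxe hxe'
    · exact hdisj e heK x hxe' hxe
    · exact hK.2 e heK e' he'K hne x hxe hxe'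

lemma IsMaximumMatching.exists_mem_of_adj [Fintype V] [DecidableEq V] {K : Finset (Sym2 V)}
    (hK : IsMaximumMatching G K) {x y : V} (hxy : G.Adj x y) (hx : ∀ e ∈ K, x ∉ e) :
    ∃ e ∈ K, y ∈ e := by
  by_contra! hy
  have hxyK : s(x, y) ∉ K := fun h => hx _ h (Sym2.mem_mk_left x y)
  have hins := hK.1.insert hxy fun e he z hz => by
    rcases Sym2.mem_iff.1 hz with rfl | rfl
    exacts [hx e he, hy e he]
  have := hins.card_le_matchingNumber
  rw [Finset.card_insert_of_notMem hxyK, hK.2] at this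
  omega

lemma IsMaximumMatching.exchange [Fintype V] [DecidableEq V] {K : Finset (Sym2 V)}
    (hK : IsMaximumMatching G K) {x y z : V} (hxy : s(x, y) ∈ K) (hxz : G.Adj x z)
    (hz : ∀ e ∈ K, z ∉ e) :
    IsMaximumMatching G (insert s(x, z) (K.erase s(x, y))) ∧
      ∀ e ∈ insert s(x, z) (K.erase s(x, y)), y ∉ e := by
  have hyz : y ≠ z := by rintro rfl; exact hz _ hxy (Sym2.mem_mk_right x y)
  have hxy_ne : x ≠ y := (hK.1.1 _ hxy).ne
  have hdisj : ∀ e ∈ K.erase s(x, y), ∀ p ∈ s(x, y), p ∉ e := fun e he p hp hpe =>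
    Finset.ne_of_mem_erase he (hK.1.eq_of_mem (Finset.mem_of_mem_erase he) hxy hpe hp)
  have hxz_notMem : s(x, z) ∉ K.erase s(x, y) :=
    fun h => hz _ (Finset.mem_of_mem_erase h) (Sym2.mem_mk_right x z)
  refine ⟨⟨(hK.1.mono (Finset.erase_subset _ _)).insert hxz
    fun e he p hp hpe => ?_, ?_⟩, ?_⟩
  · rcases Sym2.mem_iff.1 hp with rfl | rfl
    exacts [hdisj e he p (Sym2.mem_mk_left p y) hpe, hz e (Finset.mem_of_mem_erase he) hpe]
  · rw [Finset.card_insert_of_notMem hxz_notMem, Finset.card_erase_of_mem hxy, ← hK.2]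
    have := Finset.card_pos.2 ⟨_, hxy⟩
    omega
  · intro e he hye
    rcases Finset.mem_insert.1 he with rfl | he
    · rcases Sym2.mem_iff.1 hye with h | h
      exacts [hxy_ne h.symm, hyz h]
    · exact hdisj e he y (Sym2.mem_mk_right x y) hye

/-- Induction on `|M \ N|`. If `ta ∈ M` covers `a`, then `N` covers `t` by some `tr`; trading
`tr` for `ta` in `N` moves its missed vertex to `r`. As `M'' ⊆ M ∪ N'`, the matching `M''`
obtained for `r` meets `a` at most in `ta`, and trading `ta` for `tr` in it moves the missed
vertex back to `a`. -/
theorem IsMaximumMatching.exists_missing_subset_union [Fintype V] [DecidableEq V]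
    {M N : Finset (Sym2 V)} (hM : IsMaximumMatching G M) (hN : IsMaximumMatching G N) {a : V}
    (haN : ∀ e ∈ N, a ∉ e) :
    ∃ M', IsMaximumMatching G M' ∧ (∀ e ∈ M', a ∉ e) ∧ M' ⊆ M ∪ N ∧
      ∀ e ∈ M \ M', ∃ x ∈ e, x ∈ gallaiD G := by
  induction hk : (M \ N).card using Nat.strong_induction_on generalizing N a with
  | _ k IH =>
  by_cases haM : ∀ e ∈ M, a ∉ e
  · exact ⟨M, hM, haM, Finset.subset_union_left, by simp⟩
  push Not at haM
  obtain ⟨e, heM, hae⟩ := haM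
  obtain ⟨t, rfl⟩ := Sym2.mem_iff_exists.1 hae
  rw [Sym2.eq_swap] at heM
  have hta : G.Adj t a := hM.1.1 _ heM
  have haD : a ∈ gallaiD G := mem_gallaiD.2 ⟨N, hN, haN⟩
  obtain ⟨f, hfN, htf⟩ := hN.exists_mem_of_adj hta.symm haN
  obtain ⟨r, rfl⟩ := Sym2.mem_iff_exists.1 htf
  have htrM : s(t, r) ∉ M := fun h =>
    haN _ hfN (hM.1.eq_of_mem heM h (Sym2.mem_mk_left t a) (Sym2.mem_mk_left t r) ▸
      Sym2.mem_mk_right t a)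
  have htaN : s(t, a) ∉ N := fun h => haN _ h (Sym2.mem_mk_right t a)
  set N' := insert s(t, a) (N.erase s(t, r))
  obtain ⟨hN', hrN'⟩ := hN.exchange hfN hta haN
  have hMN' : M ∪ N' ⊆ M ∪ N := Finset.union_insert_erase_subset heM _
  have hlt : (M \ N').card < k := hk ▸ Finset.card_sdiff_insert_erase_lt heM htaN htrM
  obtain ⟨M'', hM'', hrM'', hM''sub, hM''drop⟩ := IH _ hlt hN' hrN' rfl
  by_cases htaM'' : s(t, a) ∈ M''
  · obtain ⟨hM', haM'⟩ := hM''.exchange htaM'' (hN.1.1 _ hfN) hrM''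
    refine ⟨_, hM', haM', fun e he => ?_, fun e he => ?_⟩
    · rcases Finset.mem_insert.1 he with rfl | he
      exacts [Finset.mem_union_right _ hfN,
        hMN' (hM''sub (Finset.mem_of_mem_erase he))]
    · by_cases heta : e = s(t, a)
      · exact ⟨a, heta ▸ Sym2.mem_mk_right t a, haD⟩
      refine hM''drop e (Finset.mem_sdiff.2 ⟨(Finset.mem_sdiff.1 he).1, fun heM'' => ?_⟩)
      exact (Finset.mem_sdiff.1 he).2
        (Finset.mem_insert_of_mem (Finset.mem_erase.2 ⟨heta, heM''⟩))
  · refine ⟨M'', hM'', fun e he hae => htaM'' ?_, hM''sub.trans hMN', hM''drop⟩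
    rcases Finset.mem_union.1 (hM''sub he) with heM' | heN'
    · exact hM.1.eq_of_mem heM' heM hae (Sym2.mem_mk_right t a) ▸ he
    · rcases Finset.mem_insert.1 heN' with rfl | heN
      exacts [he, (haN e (Finset.mem_of_mem_erase heN) hae).elim]

end

/-- if `M` is a maximum matching of `G` and `v ∈ A(G)` (a vertex outside
`D(G)` adjacent to `D(G)`), then `M` contains an edge joining `v` to a vertex of `D(G)`. -/
theorem maximum_matching_edge_to_gallaiD {V : Type*} [Fintype V] (G : SimpleGraph V)
    (M : Finset (Sym2 V)) (hM : IsMatching G M) (hmax : M.card = matchingNumber G)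
    (v : V) (hv : v ∉ gallaiD G) (hadj : ∃ u ∈ gallaiD G, G.Adj v u) :
    ∃ u ∈ gallaiD G, s(v, u) ∈ M := by
  classical
  obtain ⟨u, huD, hvu⟩ := hadj
  have hMmax : IsMaximumMatching G M := ⟨hM, hmax⟩
  obtain ⟨e, heM, hve⟩ : ∃ e ∈ M, v ∈ e := by
    by_contra! h
    exact hv (mem_gallaiD.2 ⟨M, hMmax, h⟩)
  obtain ⟨w, rfl⟩ := Sym2.mem_iff_exists.1 hve
  refine ⟨w, ?_, heM⟩
  obtain ⟨N, hN, huN⟩ := mem_gallaiD.1 huD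
  obtain ⟨M', hM', huM', -, hdrop⟩ := hMmax.exists_missing_subset_union hN huN
  by_cases hvwM' : s(v, w) ∈ M'
  · obtain ⟨hL, hwL⟩ := hM'.exchange hvwM' hvu huM'
    exact mem_gallaiD.2 ⟨_, hL, hwL⟩
  · obtain ⟨x, hx, hxD⟩ := hdrop _ (Finset.mem_sdiff.2 ⟨heM, hvwM'⟩)
    rcases Sym2.mem_iff.1 hx with rfl | rfl
    exacts [absurd hxD hv, hxD]

end TB
end
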